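/- Let Φ = D_n realized in ℝⁿ, with positive roots Φ⁺ = {ε_i − ε_j, ε_i + ε_j : i < j}. Let μ = (μ_1,…,μ_n) ∈ ℤⁿ with μ_1 ≤ … ≤ μ_{n−1} ≤ −|μ_n| (an integral antidominant weight for D_n), let w ∈ W'_n act on ℝⁿ by w·ε_{n+1−k} = sgn(w(k))·ε_{n+1−|w(k)|}, and set λ = wμ. Assume that for every α ∈ Φ⁺: ⟨λ, α∨⟩ > 0 if and only if w⁻¹α ∈ −Φ⁺ (equivalently, λ lies in the upper closure of the chamber wC∘, equivalently w ∈ W^J). Then p(λ⁻) equals p(⁻w⃗) or p(⁻(wt)⃗). -/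
import Mathlib


/-- Greene invariant `c_k(x)` of the length-`N` sequence `x` (positions `1,…,N`). -/
noncomputable def greeneC {α : Type*} [LinearOrder α] (N : ℕ) (x : ℕ → α) (k : ℕ) : ℕ :=
  sSup {m : ℕ | ∃ S : Finset ℕ, (∀ i ∈ S, 1 ≤ i ∧ i ≤ N) ∧ m = S.card ∧
    ∃ f : ℕ → Fin k, ∀ i ∈ S, ∀ j ∈ S, i < j → f i = f j → x i ≤ x j}

/-- The Robinson–Schensted shape of `x`, via Greene's theorem:
`p(x)_k = c_k(x) − c_{k−1}(x)`. -/
noncomputable def rsShape {α : Type*} [LinearOrder α] (N : ℕ) (x : ℕ → α) (k : ℕ) : ℕ :=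
  greeneC N x k - greeneC N x (k - 1)

/-- `w` is an element of the group `W_n` of signed permutations. -/
def IsSignedPerm (n : ℕ) (w : Equiv.Perm ℤ) : Prop :=
  (∀ i : ℤ, w (-i) = -w i) ∧ ∀ i : ℤ, 1 ≤ i → i ≤ (n : ℤ) → 1 ≤ |w i| ∧ |w i| ≤ (n : ℤ)

/-- The action of `w ∈ W_n` on `ℝⁿ` determined by
`w·ε_{n+1−k} = sgn(w(k))·ε_{n+1−|w(k)|}` for `1 ≤ k ≤ n`. -/
def act (n : ℕ) (w : Equiv.Perm ℤ) (v : ℕ → ℝ) : ℕ → ℝ := fun m =>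
  ∑ k ∈ Finset.Icc 1 n,
    if n + 1 - (w (k : ℤ)).natAbs = m then (Int.sign (w (k : ℤ)) : ℝ) * v (n + 1 - k) else 0

/-- For a length-`n` sequence `x` (positions `1,…,n`), the length-`2n` sequence
`x⁻ = (x_1,…,x_n,−x_n,…,−x_1)` (positions `1,…,2n`). -/
def supMinus (n : ℕ) (x : ℕ → ℝ) : ℕ → ℝ := fun i =>
  if i ≤ n then x i else -x (2 * n + 1 - i)

/-- For a length-`n` sequence `x` (positions `1,…,n`), the length-`2n` sequence
`⁻x = (−x_n,…,−x_1,x_1,…,x_n)` (positions `1,…,2n`). -/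
def preMinus (n : ℕ) (x : ℕ → ℤ) : ℕ → ℤ := fun i =>
  if i ≤ n then -x (n + 1 - i) else x (i - n)

/-- The standard basis vector `ε_i` of `ℝⁿ` (coordinates indexed `1,…,n`). -/
def eps (i : ℕ) : ℕ → ℝ := fun m => if m = i then 1 else 0

/-- The positive roots of `D_n`: `ε_i − ε_j, ε_i + ε_j (i < j)`. -/
def PosD (n : ℕ) : Set (ℕ → ℝ) :=
  {α | ∃ i j, 1 ≤ i ∧ i < j ∧ j ≤ n ∧ (α = eps i - eps j ∨ α = eps i + eps j)}

/-- The standard bilinear form on `ℝⁿ` (coordinates indexed `1,…,n`). -/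
def formR (n : ℕ) (x y : ℕ → ℝ) : ℝ := ∑ m ∈ Finset.Icc 1 n, x m * y m

lemma greene_congr {α β : Type*} [LinearOrder α] [LinearOrder β] (N k : ℕ) (x : ℕ → α)
    (y : ℕ → β) (h : ∀ i j, 1 ≤ i → i < j → j ≤ N → (x i ≤ x j ↔ y i ≤ y j)) :
    greeneC N x k = greeneC N y k := by
  unfold greeneC
  congr 1
  ext m
  constructor
  · rintro ⟨S, hS, hm, f, hf⟩
    exact ⟨S, hS, hm, f, fun i hi j hj hij hfij =>
      (h i j (hS i hi).1 hij (hS j hj).2).mp (hf i hi j hj hij hfij)⟩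
  · rintro ⟨S, hS, hm, f, hf⟩
    exact ⟨S, hS, hm, f, fun i hi j hj hij hfij =>
      (h i j (hS i hi).1 hij (hS j hj).2).mpr (hf i hi j hj hij hfij)⟩

lemma greene_inverse_subset (N k : ℕ) (σ τ : ℕ → ℕ)
    (hσ : ∀ i, 1 ≤ i → i ≤ N → 1 ≤ σ i ∧ σ i ≤ N)
    (hτσ : ∀ i, 1 ≤ i → i ≤ N → τ (σ i) = i) (m : ℕ)
    (hm : m ∈ {m : ℕ | ∃ S : Finset ℕ, (∀ i ∈ S, 1 ≤ i ∧ i ≤ N) ∧ m = S.card ∧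
      ∃ f : ℕ → Fin k, ∀ i ∈ S, ∀ j ∈ S, i < j → f i = f j → σ i ≤ σ j}) :
    m ∈ {m : ℕ | ∃ S : Finset ℕ, (∀ i ∈ S, 1 ≤ i ∧ i ≤ N) ∧ m = S.card ∧
      ∃ f : ℕ → Fin k, ∀ i ∈ S, ∀ j ∈ S, i < j → f i = f j → τ i ≤ τ j} := by
  obtain ⟨S, hS, hm, f, hf⟩ := hm
  have hinj : Set.InjOn σ S := by
    intro a ha b hb hab
    have h1 := hτσ a (hS a ha).1 (hS a ha).2
    have h2 := hτσ b (hS b hb).1 (hS b hb).2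
    rw [← h1, ← h2, hab]
  refine ⟨S.image σ, ?_, ?_, f ∘ τ, ?_⟩
  · intro i hi
    obtain ⟨a, ha, rfl⟩ := Finset.mem_image.mp hi
    exact hσ a (hS a ha).1 (hS a ha).2
  · rw [Finset.card_image_of_injOn hinj]; exact hm
  · intro i' hi' j' hj' hij hfij
    obtain ⟨i, hi, rfl⟩ := Finset.mem_image.mp hi'
    obtain ⟨j, hj, rfl⟩ := Finset.mem_image.mp hj'
    have e1 : τ (σ i) = i := hτσ i (hS i hi).1 (hS i hi).2
    have e2 : τ (σ j) = j := hτσ j (hS j hj).1 (hS j hj).2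
    rw [e1, e2]
    rcases lt_trichotomy i j with h | h | h
    · exact h.le
    · exact h.le
    · exfalso
      have := hf j hj i hi h (by simpa [Function.comp, e1, e2] using hfij.symm)
      omega

lemma greene_inverse (N k : ℕ) (σ τ : ℕ → ℕ)
    (hσ : ∀ i, 1 ≤ i → i ≤ N → 1 ≤ σ i ∧ σ i ≤ N)
    (hτ : ∀ i, 1 ≤ i → i ≤ N → 1 ≤ τ i ∧ τ i ≤ N)
    (hτσ : ∀ i, 1 ≤ i → i ≤ N → τ (σ i) = i)
    (hστ : ∀ i, 1 ≤ i → i ≤ N → σ (τ i) = i) :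
    greeneC N σ k = greeneC N τ k := by
  unfold greeneC
  congr 1
  ext m
  exact ⟨greene_inverse_subset N k σ τ hσ hτσ m, greene_inverse_subset N k τ σ hτ hστ m⟩


def Efun (n : ℕ) (v : ℤ) : ℕ → ℝ := fun m =>
  if m = n + 1 - v.natAbs then (v.sign : ℝ) else 0

lemma formR_Efun (n : ℕ) (x : ℕ → ℝ) (v : ℤ) (h1 : 1 ≤ v.natAbs) (h2 : v.natAbs ≤ n) :
    formR n x (Efun n v) = (v.sign : ℝ) * x (n + 1 - v.natAbs) := by
  unfold formR Efun
  rw [Finset.sum_congr rfl (fun m _ => by rw [mul_ite, mul_zero])]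
  rw [Finset.sum_ite_eq' (Finset.Icc 1 n) (n + 1 - v.natAbs) (fun m => x m * (v.sign : ℝ))]
  rw [if_pos (Finset.mem_Icc.mpr ⟨by omega, by omega⟩)]
  ring

lemma formR_sub_right (n : ℕ) (x a b : ℕ → ℝ) :
    formR n x (fun m => a m - b m) = formR n x a - formR n x b := by
  unfold formR
  rw [← Finset.sum_sub_distrib]
  exact Finset.sum_congr rfl fun m _ => by ring

lemma formR_EE (n : ℕ) (q r : ℤ) (hq1 : 1 ≤ q.natAbs) (hq2 : q.natAbs ≤ n)
    (hr1 : 1 ≤ r.natAbs) (hr2 : r.natAbs ≤ n) (hne : q.natAbs ≠ r.natAbs) :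
    formR n (Efun n q) (Efun n r) = 0 := by
  unfold formR Efun
  refine Finset.sum_eq_zero fun m _ => ?_
  have : ¬(m = n + 1 - q.natAbs ∧ m = n + 1 - r.natAbs) := by omega
  split_ifs with h1 h2 <;> simp_all

lemma formR_Eself (n : ℕ) (v : ℤ) (h1 : 1 ≤ v.natAbs) (h2 : v.natAbs ≤ n) :
    formR n (Efun n v) (Efun n v) = 1 := by
  unfold formR Efun
  have hv : v ≠ 0 := by omega
  have hs : (v.sign : ℝ) * (v.sign : ℝ) = 1 := by
    rcases Int.lt_or_lt_of_ne hv with h | h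
    · rw [Int.sign_eq_neg_one_of_neg h]; norm_num
    · rw [Int.sign_eq_one_of_pos h]; norm_num
  have key : ∀ m, ((if m = n + 1 - v.natAbs then (v.sign : ℝ) else 0) *
      (if m = n + 1 - v.natAbs then (v.sign : ℝ) else 0)) =
      (if m = n + 1 - v.natAbs then (1:ℝ) else 0) := by
    intro m
    split_ifs with h
    · exact hs
    · ring
  rw [Finset.sum_congr rfl fun m _ => key m]
  rw [Finset.sum_ite_eq' (Finset.Icc 1 n) (n + 1 - v.natAbs) (fun _ => (1:ℝ))]
  rw [if_pos (Finset.mem_Icc.mpr ⟨by omega, by omega⟩)]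

lemma formR_EsubE_self (n : ℕ) (q r : ℤ) (hq1 : 1 ≤ q.natAbs) (hq2 : q.natAbs ≤ n)
    (hr1 : 1 ≤ r.natAbs) (hr2 : r.natAbs ≤ n) (hne : q.natAbs ≠ r.natAbs) :
    formR n (fun m => Efun n r m - Efun n q m) (fun m => Efun n r m - Efun n q m) = 2 := by
  unfold formR
  have : ∀ m, (Efun n r m - Efun n q m) * (Efun n r m - Efun n q m) =
      Efun n r m * Efun n r m - Efun n r m * Efun n q m -
      (Efun n q m * Efun n r m - Efun n q m * Efun n q m) := fun m => by ring
  rw [Finset.sum_congr rfl fun m _ => this m]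
  rw [Finset.sum_sub_distrib, Finset.sum_sub_distrib, Finset.sum_sub_distrib]
  have e1 := formR_Eself n r hr1 hr2
  have e2 := formR_Eself n q hq1 hq2
  have e3 := formR_EE n r q hr1 hr2 hq1 hq2 (Ne.symm hne)
  have e4 := formR_EE n q r hq1 hq2 hr1 hr2 hne
  unfold formR at e1 e2 e3 e4
  rw [e1, e2, e3, e4]
  ring

lemma E_sub_mem (n : ℕ) (q r : ℤ) (hq1 : 1 ≤ q.natAbs) (hq2 : q.natAbs ≤ n)
    (hr1 : 1 ≤ r.natAbs) (hr2 : r.natAbs ≤ n) (hne : q.natAbs ≠ r.natAbs) (hlt : q < r) :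
    (fun m => Efun n r m - Efun n q m) ∈ PosD n := by
  have hq0 : q ≠ 0 := by omega
  have hr0 : r ≠ 0 := by omega
  rcases lt_or_gt_of_ne hq0 with hqneg | hqpos
  · rcases lt_or_gt_of_ne hr0 with hrneg | hrpos
    · -- q < r < 0 : eps i - eps j with i = n+1-|q|, j = n+1-|r|
      refine ⟨n + 1 - q.natAbs, n + 1 - r.natAbs, by omega, by omega, by omega, Or.inl ?_⟩
      funext m
      simp only [Efun, eps, Pi.sub_apply]
      rw [Int.sign_eq_neg_one_of_neg hqneg, Int.sign_eq_neg_one_of_neg hrneg]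
      have : ¬(m = n + 1 - r.natAbs ∧ m = n + 1 - q.natAbs) := by omega
      split_ifs with h1 h2 <;> simp_all <;> norm_num
    · -- q < 0 < r : eps i + eps j
      rcases lt_or_gt_of_ne hne with hc | hc
      · refine ⟨n + 1 - r.natAbs, n + 1 - q.natAbs, by omega, by omega, by omega, Or.inr ?_⟩
        funext m
        simp only [Efun, eps, Pi.add_apply]
        rw [Int.sign_eq_neg_one_of_neg hqneg, Int.sign_eq_one_of_pos hrpos]
        have : ¬(m = n + 1 - r.natAbs ∧ m = n + 1 - q.natAbs) := by omega
        split_ifs with h1 h2 <;> simp_all <;> norm_num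
      · refine ⟨n + 1 - q.natAbs, n + 1 - r.natAbs, by omega, by omega, by omega, Or.inr ?_⟩
        funext m
        simp only [Efun, eps, Pi.add_apply]
        rw [Int.sign_eq_neg_one_of_neg hqneg, Int.sign_eq_one_of_pos hrpos]
        have : ¬(m = n + 1 - r.natAbs ∧ m = n + 1 - q.natAbs) := by omega
        split_ifs with h1 h2 <;> simp_all <;> norm_num
  · -- 0 < q < r : eps i - eps j with i = n+1-|r|, j = n+1-|q|
    have hrpos : 0 < r := lt_trans hqpos hlt
    refine ⟨n + 1 - r.natAbs, n + 1 - q.natAbs, by omega, by omega, by omega, Or.inl ?_⟩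
    funext m
    simp only [Efun, eps, Pi.sub_apply]
    rw [Int.sign_eq_one_of_pos hqpos, Int.sign_eq_one_of_pos hrpos]
    have : ¬(m = n + 1 - r.natAbs ∧ m = n + 1 - q.natAbs) := by omega
    split_ifs with h1 h2 <;> simp_all

lemma act_sub (n : ℕ) (u : Equiv.Perm ℤ) (a b : ℕ → ℝ) :
    act n u (fun m => a m - b m) = fun m => act n u a m - act n u b m := by
  funext m
  unfold act
  rw [← Finset.sum_sub_distrib]
  refine Finset.sum_congr rfl fun k _ => ?_
  split_ifs with h <;> ring

lemma act_Efun (n : ℕ) (u : Equiv.Perm ℤ) (hodd : ∀ i, u (-i) = -u i) (q : ℤ)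
    (hq1 : 1 ≤ q.natAbs) (hq2 : q.natAbs ≤ n) :
    act n u (Efun n q) = Efun n (u q) := by
  funext m
  unfold act Efun
  have key : ∀ k ∈ Finset.Icc 1 n,
      (if n + 1 - (u (k : ℤ)).natAbs = m then
        (Int.sign (u (k : ℤ)) : ℝ) *
          (if (n + 1 - k : ℕ) = n + 1 - q.natAbs then (q.sign : ℝ) else 0) else 0) =
      (if k = q.natAbs then
        (if n + 1 - (u (k : ℤ)).natAbs = m then (Int.sign (u (k : ℤ)) : ℝ) * (q.sign : ℝ) else 0)
       else 0) := by
    intro k hk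
    rw [Finset.mem_Icc] at hk
    have hcond : ((n + 1 - k : ℕ) = n + 1 - q.natAbs) ↔ k = q.natAbs := by omega
    by_cases h : k = q.natAbs
    · rw [if_pos (hcond.mpr h), if_pos h]
    · rw [if_neg (fun hh => h (hcond.mp hh)), if_neg h, mul_zero, ite_self]
  rw [Finset.sum_congr rfl key]
  rw [Finset.sum_ite_eq' (Finset.Icc 1 n) q.natAbs]
  rw [if_pos (Finset.mem_Icc.mpr ⟨hq1, hq2⟩)]
  have hq0 : q ≠ 0 := by omega
  have habs : (u (q.natAbs : ℤ)).natAbs = (u q).natAbs := by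
    rcases Int.lt_or_lt_of_ne hq0 with h | h
    · have e : ((q.natAbs : ℤ)) = -q := by omega
      rw [e, hodd, Int.natAbs_neg]
    · have e : ((q.natAbs : ℤ)) = q := by omega
      rw [e]
  have hsign : (Int.sign (u (q.natAbs : ℤ)) : ℝ) * (q.sign : ℝ) = (Int.sign (u q) : ℝ) := by
    rcases Int.lt_or_lt_of_ne hq0 with h | h
    · have e : (q.natAbs : ℤ) = -q := by omega
      rw [e, hodd, Int.sign_neg, Int.sign_eq_neg_one_of_neg h]
      push_cast
      ring
    · have e : (q.natAbs : ℤ) = q := by omega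
      rw [e, Int.sign_eq_one_of_pos h]
      push_cast
      ring
  rw [habs, ← hsign]
  by_cases h : n + 1 - (u q).natAbs = m
  · rw [if_pos h, if_pos h.symm]
  · rw [if_neg h, if_neg (fun hh => h hh.symm)]



def tflip : Equiv.Perm ℤ where
  toFun q := if q = 1 then -1 else if q = -1 then 1 else q
  invFun q := if q = 1 then -1 else if q = -1 then 1 else q
  left_inv q := by by_cases h1 : q = 1 <;> by_cases h2 : q = -1 <;> simp [h1, h2] <;> omega
  right_inv q := by by_cases h1 : q = 1 <;> by_cases h2 : q = -1 <;> simp [h1, h2] <;> omega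

lemma tflip_apply (q : ℤ) : tflip q = if q = 1 then -1 else if q = -1 then 1 else q := rfl

lemma tflip_natAbs (q : ℤ) : (tflip q).natAbs = q.natAbs := by
  rw [tflip_apply]; split_ifs <;> omega

lemma tflip_fix {q : ℤ} (h : 2 ≤ q.natAbs) : tflip q = q := by
  rw [tflip_apply]; split_ifs <;> omega

lemma tflip_odd (q : ℤ) : tflip (-q) = -tflip q := by
  rw [tflip_apply, tflip_apply]; split_ifs <;> omega

lemma tflip_lt {q r : ℤ} (hq : 1 ≤ q.natAbs) (hr : 1 ≤ r.natAbs)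
    (h : q.natAbs ≠ r.natAbs) : q < r ↔ tflip q < tflip r := by
  rw [tflip_apply, tflip_apply]; split_ifs <;> omega

def sIdx (n i : ℕ) : ℤ := if i ≤ n then (i : ℤ) - n - 1 else (i : ℤ) - n

def ncIdx (n : ℕ) (v : ℤ) : ℕ := (v + n + if 0 < v then 0 else 1).toNat

lemma sIdx_bounds {n i : ℕ} (h1 : 1 ≤ i) (h2 : i ≤ 2 * n) :
    1 ≤ (sIdx n i).natAbs ∧ (sIdx n i).natAbs ≤ n := by
  unfold sIdx; split_ifs <;> omega

lemma sIdx_strictMono {n i j : ℕ} (h1 : 1 ≤ i) (hij : i < j) (h2 : j ≤ 2 * n) :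
    sIdx n i < sIdx n j := by
  unfold sIdx; split_ifs <;> omega

lemma ncIdx_bounds {n : ℕ} {v : ℤ} (h1 : 1 ≤ v.natAbs) (h2 : v.natAbs ≤ n) :
    1 ≤ ncIdx n v ∧ ncIdx n v ≤ 2 * n := by
  unfold ncIdx; split_ifs <;> omega

lemma ncIdx_strictMono {n : ℕ} {v v' : ℤ} (h1 : 1 ≤ v.natAbs) (h2 : v.natAbs ≤ n)
    (h1' : 1 ≤ v'.natAbs) (h2' : v'.natAbs ≤ n) (h : v < v') : ncIdx n v < ncIdx n v' := by
  unfold ncIdx; split_ifs <;> omega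

lemma sIdx_ncIdx {n : ℕ} {v : ℤ} (h1 : 1 ≤ v.natAbs) (h2 : v.natAbs ≤ n) :
    sIdx n (ncIdx n v) = v := by
  unfold sIdx ncIdx; split_ifs <;> omega

lemma ncIdx_sIdx {n i : ℕ} (h1 : 1 ≤ i) (h2 : i ≤ 2 * n) : ncIdx n (sIdx n i) = i := by
  unfold sIdx ncIdx; split_ifs <;> omega

def Lfn (n : ℕ) (lam : ℕ → ℝ) (v : ℤ) : ℝ := -(v.sign : ℝ) * lam (n + 1 - v.natAbs)

def MM (n : ℕ) (μ : ℕ → ℤ) (x : ℤ) : ℤ := -x.sign * μ (n + 1 - x.natAbs)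

def Mpp (n : ℕ) (μ : ℕ → ℤ) (x : ℤ) : ℤ := x.sign * |μ (n + 1 - x.natAbs)|

lemma Lfn_odd (n : ℕ) (lam : ℕ → ℝ) (v : ℤ) : Lfn n lam (-v) = -Lfn n lam v := by
  unfold Lfn; rw [Int.sign_neg, Int.natAbs_neg]; push_cast; ring

lemma Mpp_odd (n : ℕ) (μ : ℕ → ℤ) (x : ℤ) : Mpp n μ (-x) = -Mpp n μ x := by
  unfold Mpp; rw [Int.sign_neg, Int.natAbs_neg]; ring

lemma supMinus_eq (n i : ℕ) (lam : ℕ → ℝ) (h1 : 1 ≤ i) (h2 : i ≤ 2 * n) :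
    supMinus n lam i = Lfn n lam (sIdx n i) := by
  unfold supMinus Lfn sIdx
  by_cases h : i ≤ n
  · rw [if_pos h, if_pos h]
    rw [Int.sign_eq_neg_one_of_neg (by omega : (i : ℤ) - n - 1 < 0)]
    have ha : ((i : ℤ) - n - 1).natAbs = n + 1 - i := by omega
    rw [ha]
    have hb : n + 1 - (n + 1 - i) = i := by omega
    rw [hb]; push_cast; ring
  · rw [if_neg h, if_neg h]
    rw [Int.sign_eq_one_of_pos (by omega : 0 < (i : ℤ) - n)]
    have ha : ((i : ℤ) - n).natAbs = i - n := by omega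
    rw [ha]
    have hb : n + 1 - (i - n) = 2 * n + 1 - i := by omega
    rw [hb]; push_cast; ring

lemma preMinus_eq (n i : ℕ) (v : Equiv.Perm ℤ) (hodd : ∀ x, v (-x) = -v x)
    (h1 : 1 ≤ i) (h2 : i ≤ 2 * n) :
    preMinus n (fun j => v (j : ℤ)) i = v (sIdx n i) := by
  unfold preMinus sIdx
  by_cases h : i ≤ n
  · rw [if_pos h, if_pos h]
    show -v ((n + 1 - i : ℕ) : ℤ) = v ((i : ℤ) - n - 1)
    have e : ((n + 1 - i : ℕ) : ℤ) = (n : ℤ) + 1 - i := by omega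
    rw [e]
    have e2 : (i : ℤ) - n - 1 = -((n : ℤ) + 1 - i) := by ring
    rw [e2, hodd]
  · rw [if_neg h, if_neg h]
    show v ((i - n : ℕ) : ℤ) = v ((i : ℤ) - n)
    have e : ((i - n : ℕ) : ℤ) = (i : ℤ) - n := by omega
    rw [e]

lemma symm_odd (w : Equiv.Perm ℤ) (hodd : ∀ i, w (-i) = -w i) (x : ℤ) :
    w.symm (-x) = -w.symm x := by
  have : w (-(w.symm x)) = -x := by rw [hodd, Equiv.apply_symm_apply]
  rw [← this, Equiv.symm_apply_apply]

lemma symm_bounds (n : ℕ) (w : Equiv.Perm ℤ) (hw : IsSignedPerm n w) :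
    ∀ q : ℤ, 1 ≤ q.natAbs → q.natAbs ≤ n → 1 ≤ (w.symm q).natAbs ∧ (w.symm q).natAbs ≤ n := by
  have hmapsAbs : ∀ x : ℤ, 1 ≤ x.natAbs → x.natAbs ≤ n → 1 ≤ (w x).natAbs ∧ (w x).natAbs ≤ n := by
    intro x hx1 hx2
    rcases Int.lt_or_lt_of_ne (by omega : x ≠ 0) with h | h
    · have := hw.2 (-x) (by omega) (by omega)
      rw [hw.1] at this
      rw [Int.abs_eq_natAbs, Int.natAbs_neg] at this
      omega
    · have := hw.2 x (by omega) (by omega)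
      rw [Int.abs_eq_natAbs] at this
      omega
  intro q hq1 hq2
  set T : Finset ℤ := (Finset.Icc (-(n : ℤ)) n).erase 0 with hT
  have hmemT : ∀ x : ℤ, x ∈ T ↔ 1 ≤ x.natAbs ∧ x.natAbs ≤ n := by
    intro x
    rw [hT, Finset.mem_erase, Finset.mem_Icc]
    omega
  have hsub : T.image w ⊆ T := by
    intro y hy
    obtain ⟨x, hx, rfl⟩ := Finset.mem_image.mp hy
    rw [hmemT] at hx ⊢
    exact hmapsAbs x hx.1 hx.2
  have heq : T.image w = T :=
    Finset.eq_of_subset_of_card_le hsub (le_of_eq (Finset.card_image_of_injective T w.injective).symm)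
  have hqT : q ∈ T := (hmemT q).mpr ⟨hq1, hq2⟩
  rw [← heq] at hqT
  obtain ⟨x, hx, hxq⟩ := Finset.mem_image.mp hqT
  have : w.symm q = x := by rw [← hxq, Equiv.symm_apply_apply]
  rw [this]
  exact (hmemT x).mp hx

lemma lam_eq (n : ℕ) (w : Equiv.Perm ℤ) (hw : IsSignedPerm n w) (μ : ℕ → ℤ)
    (q : ℤ) (hq1 : 1 ≤ q.natAbs) (hq2 : q.natAbs ≤ n) :
    Lfn n (act n w (fun i => (μ i : ℝ))) q = (MM n μ (w.symm q) : ℝ) := by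
  have hq0 : q ≠ 0 := by omega
  have hub := symm_bounds n w hw q hq1 hq2
  set k₀ : ℕ := (w.symm q).natAbs with hk₀
  have hwk : w ((k₀ : ℕ) : ℤ) = Int.sign (w.symm q) * q := by
    rcases Int.lt_or_lt_of_ne (by omega : w.symm q ≠ 0) with h | h
    · have e : ((k₀ : ℕ) : ℤ) = -(w.symm q) := by rw [hk₀]; omega
      rw [e, hw.1, Equiv.apply_symm_apply, Int.sign_eq_neg_one_of_neg h]
      ring
    · have e : ((k₀ : ℕ) : ℤ) = w.symm q := by rw [hk₀]; omega
      rw [e, Equiv.apply_symm_apply, Int.sign_eq_one_of_pos h]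
      ring
  have hwkAbs : (w ((k₀ : ℕ) : ℤ)).natAbs = q.natAbs := by
    rw [hwk]
    rcases Int.lt_or_lt_of_ne (by omega : w.symm q ≠ 0) with h | h
    · rw [Int.sign_eq_neg_one_of_neg h]; simp
    · rw [Int.sign_eq_one_of_pos h]; simp
  have hmapsAbs : ∀ x : ℤ, 1 ≤ x.natAbs → x.natAbs ≤ n →
      1 ≤ (w x).natAbs ∧ (w x).natAbs ≤ n := by
    intro x hx1 hx2
    rcases Int.lt_or_lt_of_ne (by omega : x ≠ 0) with h | h
    · have := hw.2 (-x) (by omega) (by omega)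
      rw [hw.1, Int.abs_eq_natAbs, Int.natAbs_neg] at this
      omega
    · have := hw.2 x (by omega) (by omega)
      rw [Int.abs_eq_natAbs] at this
      omega
  have hlamval : act n w (fun i => (μ i : ℝ)) (n + 1 - q.natAbs) =
      (Int.sign (w ((k₀ : ℕ) : ℤ)) : ℝ) * (μ (n + 1 - k₀) : ℝ) := by
    unfold act
    have key : ∀ k ∈ Finset.Icc 1 n,
        (if n + 1 - (w (k : ℤ)).natAbs = n + 1 - q.natAbs then
          (Int.sign (w (k : ℤ)) : ℝ) * ((μ (n + 1 - k) : ℤ) : ℝ) else 0) =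
        (if k = k₀ then (Int.sign (w ((k₀ : ℕ) : ℤ)) : ℝ) * (μ (n + 1 - k₀) : ℝ) else 0) := by
      intro k hk
      rw [Finset.mem_Icc] at hk
      have hwkb := hmapsAbs (k : ℤ) (by omega) (by omega)
      by_cases h : k = k₀
      · rw [h]
        have hcond : n + 1 - (w ((k₀ : ℕ) : ℤ)).natAbs = n + 1 - q.natAbs := by omega
        rw [if_pos hcond, if_pos rfl]
      · rw [if_neg ?_, if_neg h]
        intro hcond
        have habs : (w (k : ℤ)).natAbs = q.natAbs := by omega
        rcases Int.natAbs_eq_natAbs_iff.mp habs with he | he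
        · have : (k : ℤ) = w.symm q := by rw [← he, Equiv.symm_apply_apply]
          apply h
          omega
        · have : (k : ℤ) = w.symm (-q) := by rw [← he, Equiv.symm_apply_apply]
          rw [symm_odd w hw.1] at this
          apply h
          omega
    rw [Finset.sum_congr rfl key, Finset.sum_ite_eq' (Finset.Icc 1 n) k₀]
    rw [if_pos (Finset.mem_Icc.mpr ⟨by omega, by omega⟩)]
  unfold Lfn MM
  rw [hlamval, hwk, ← hk₀]
  have hsign : (q.sign : ℤ) * (Int.sign (Int.sign (w.symm q) * q)) = (w.symm q).sign := by
    rcases Int.lt_or_lt_of_ne (by omega : w.symm q ≠ 0) with h | h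
    · rw [Int.sign_eq_neg_one_of_neg h]
      rcases Int.lt_or_lt_of_ne hq0 with h2 | h2
      · rw [Int.sign_eq_neg_one_of_neg h2]
        have : (-1 : ℤ) * q = -q := by ring
        rw [this, Int.sign_neg, Int.sign_eq_neg_one_of_neg h2]
        ring
      · rw [Int.sign_eq_one_of_pos h2]
        have : (-1 : ℤ) * q = -q := by ring
        rw [this, Int.sign_neg, Int.sign_eq_one_of_pos h2]
        ring
    · rw [Int.sign_eq_one_of_pos h, one_mul]
      rcases Int.lt_or_lt_of_ne hq0 with h2 | h2
      · rw [Int.sign_eq_neg_one_of_neg h2]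
        norm_num
      · rw [Int.sign_eq_one_of_pos h2]
        norm_num
  have hsignR := congrArg (fun z : ℤ => (z : ℝ)) hsign
  push_cast at hsignR ⊢
  linear_combination (-((μ (n + 1 - k₀) : ℝ))) * hsignR

section mono
variable (n : ℕ) (μ : ℕ → ℤ)

lemma mu_chain (hmono : ∀ i, 1 ≤ i → i + 1 ≤ n - 1 → μ i ≤ μ (i + 1)) :
    ∀ b a : ℕ, 1 ≤ a → a ≤ b → b ≤ n - 1 → μ a ≤ μ b := by
  intro b
  induction b with
  | zero => intro a h1 h2 _; exact absurd h2 (by omega)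
  | succ m ih =>
    intro a h1 h2 h3
    rcases Nat.lt_or_ge a (m + 1) with h | h
    · exact le_trans (ih a h1 (by omega) (by omega)) (hmono m (by omega) (by omega))
    · have : a = m + 1 := by omega
      rw [this]

lemma mu_neg (hmono : ∀ i, 1 ≤ i → i + 1 ≤ n - 1 → μ i ≤ μ (i + 1))
    (hlast : 2 ≤ n → μ (n - 1) ≤ -|μ n|) :
    ∀ b : ℕ, 2 ≤ b → b ≤ n → μ (n + 1 - b) ≤ -|μ n| := by
  intro b hb1 hb2
  have h1 : μ (n + 1 - b) ≤ μ (n - 1) := mu_chain n μ hmono (n - 1) (n + 1 - b)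
    (by omega) (by omega) (by omega)
  exact le_trans h1 (hlast (by omega))

lemma absA_mono (hmono : ∀ i, 1 ≤ i → i + 1 ≤ n - 1 → μ i ≤ μ (i + 1))
    (hlast : 2 ≤ n → μ (n - 1) ≤ -|μ n|) :
    ∀ a b : ℕ, 1 ≤ a → a < b → b ≤ n → |μ (n + 1 - a)| ≤ |μ (n + 1 - b)| := by
  intro a b ha hab hb
  have hbneg := mu_neg n μ hmono hlast b (by omega) hb
  have h0 : (0 : ℤ) ≤ |μ n| := abs_nonneg _
  rcases Nat.lt_or_ge a 2 with h | h
  · have e : a = 1 := by omega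
    rw [e]
    have e2 : n + 1 - 1 = n := by omega
    rw [e2, abs_of_nonpos (show μ (n + 1 - b) ≤ 0 by linarith)]
    linarith
  · have haneg := mu_neg n μ hmono hlast a (by omega) (by omega)
    have hc : μ (n + 1 - b) ≤ μ (n + 1 - a) := mu_chain n μ hmono (n + 1 - a) (n + 1 - b)
      (by omega) (by omega) (by omega)
    rw [abs_of_nonpos (by linarith), abs_of_nonpos (by linarith)]
    linarith

lemma Mpp_mono (hmono : ∀ i, 1 ≤ i → i + 1 ≤ n - 1 → μ i ≤ μ (i + 1))
    (hlast : 2 ≤ n → μ (n - 1) ≤ -|μ n|) :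
    ∀ x y : ℤ, 1 ≤ x.natAbs → x.natAbs ≤ n → 1 ≤ y.natAbs → y.natAbs ≤ n → x < y →
      Mpp n μ x ≤ Mpp n μ y := by
  intro x y hx1 hx2 hy1 hy2 hxy
  unfold Mpp
  have h0x : (0 : ℤ) ≤ |μ (n + 1 - x.natAbs)| := abs_nonneg _
  have h0y : (0 : ℤ) ≤ |μ (n + 1 - y.natAbs)| := abs_nonneg _
  rcases Int.lt_or_lt_of_ne (by omega : x ≠ 0) with hx | hx
  · rcases Int.lt_or_lt_of_ne (by omega : y ≠ 0) with hy | hy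
    · rw [Int.sign_eq_neg_one_of_neg hx, Int.sign_eq_neg_one_of_neg hy]
      rcases Nat.eq_or_lt_of_le (by omega : y.natAbs ≤ x.natAbs) with he | hlt
      · rw [← he]
      · have := absA_mono n μ hmono hlast y.natAbs x.natAbs hy1 hlt hx2
        linarith
    · rw [Int.sign_eq_neg_one_of_neg hx, Int.sign_eq_one_of_pos hy]
      linarith
  · have hy : 0 < y := lt_trans hx hxy
    rw [Int.sign_eq_one_of_pos hx, Int.sign_eq_one_of_pos hy]
    have hlt : x.natAbs < y.natAbs := by omega
    have := absA_mono n μ hmono hlast x.natAbs y.natAbs hx1 hlt hy2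
    linarith

end mono


/-- for `Φ = D_n`, an integral antidominant weight `μ`, `w ∈ W'_n`
and `λ = wμ` such that for every `α ∈ Φ⁺`, `⟨λ,α∨⟩ > 0 ↔ w⁻¹α ∈ −Φ⁺`, the
Robinson–Schensted shape `p(λ⁻)` equals `p(⁻w⃗)` or `p(⁻(wt)⃗)`. -/
theorem shape_lambda_eq_shape_w_typeD (n : ℕ) (w : Equiv.Perm ℤ) (hw : IsSignedPerm n w)
    (hWD : Even ((Finset.Icc 1 n).filter fun k : ℕ => w (k : ℤ) < 0).card)
    (μ : ℕ → ℤ)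
    (hmono : ∀ i, 1 ≤ i → i + 1 ≤ n - 1 → μ i ≤ μ (i + 1))
    (hlast : 2 ≤ n → μ (n - 1) ≤ -|μ n|)
    (lam : ℕ → ℝ) (hlam : lam = act n w (fun i => (μ i : ℝ)))
    (hchamber : ∀ α ∈ PosD n,
      (0 < 2 * formR n lam α / formR n α α ↔ (-(act n w.symm α)) ∈ PosD n)) :
    (∀ k, 1 ≤ k →
      rsShape (2 * n) (supMinus n lam) k =
        rsShape (2 * n) (preMinus n (fun j => w (j : ℤ))) k) ∨
    (∀ k, 1 ≤ k →
      rsShape (2 * n) (supMinus n lam) k =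
        rsShape (2 * n) (preMinus n (fun j => if j = 1 then -w (j : ℤ) else w (j : ℤ))) k) := by
  classical
  set u : Equiv.Perm ℤ := w.symm with hu
  have hwodd : ∀ x : ℤ, w (-x) = -w x := hw.1
  have huodd : ∀ x : ℤ, u (-x) = -u x := symm_odd w hw.1
  have hubnd : ∀ q : ℤ, 1 ≤ q.natAbs → q.natAbs ≤ n →
      1 ≤ (u q).natAbs ∧ (u q).natAbs ≤ n := symm_bounds n w hw
  set tw : Equiv.Perm ℤ :=
    if 0 < μ n ∨ (μ n = 0 ∧ w 1 < 0) then tflip else Equiv.refl ℤ with htw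
  have htwAbs : ∀ x : ℤ, (tw x).natAbs = x.natAbs := by
    intro x; rw [htw]; split_ifs
    · exact tflip_natAbs x
    · rfl
  have htwfix : ∀ x : ℤ, 2 ≤ x.natAbs → tw x = x := by
    intro x hx; rw [htw]; split_ifs
    · exact tflip_fix hx
    · rfl
  have htwodd : ∀ x : ℤ, tw (-x) = -tw x := by
    intro x; rw [htw]; split_ifs
    · exact tflip_odd x
    · rfl
  have htwtw : ∀ x : ℤ, tw (tw x) = x := by
    intro x; rw [htw]; split_ifs
    · exact tflip.left_inv x
    · rfl
  have htwlt : ∀ x y : ℤ, 1 ≤ x.natAbs → 1 ≤ y.natAbs → x.natAbs ≠ y.natAbs →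
      (x < y ↔ tw x < tw y) := by
    intro x y hx hy hne; rw [htw]; split_ifs
    · exact tflip_lt hx hy hne
    · rfl
  set u'' : Equiv.Perm ℤ := u.trans tw with hu''def
  set w'' : Equiv.Perm ℤ := tw.trans w with hw''def
  have hu''app : ∀ x : ℤ, u'' x = tw (u x) := fun x => rfl
  have hw''app : ∀ x : ℤ, w'' x = w (tw x) := fun x => rfl
  have hu''abs : ∀ x : ℤ, (u'' x).natAbs = (u x).natAbs := fun x => htwAbs (u x)
  have hu''odd : ∀ x : ℤ, u'' (-x) = -u'' x := by
    intro x; rw [hu''app, hu''app, huodd, htwodd]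
  have hw''odd : ∀ x : ℤ, w'' (-x) = -w'' x := by
    intro x; rw [hw''app, hw''app, htwodd, hwodd]
  have hu''bnd : ∀ q : ℤ, 1 ≤ q.natAbs → q.natAbs ≤ n →
      1 ≤ (u'' q).natAbs ∧ (u'' q).natAbs ≤ n := by
    intro q h1 h2; rw [hu''abs]; exact hubnd q h1 h2
  have hw''u'' : ∀ x : ℤ, w'' (u'' x) = x := by
    intro x; rw [hu''app, hw''app, htwtw]; exact w.apply_symm_apply x
  have hu''w'' : ∀ x : ℤ, u'' (w'' x) = x := by
    intro x; rw [hw''app, hu''app]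
    rw [show u (w (tw x)) = tw x from w.symm_apply_apply (tw x), htwtw]
  have hw''bnd : ∀ q : ℤ, 1 ≤ q.natAbs → q.natAbs ≤ n →
      1 ≤ (w'' q).natAbs ∧ (w'' q).natAbs ≤ n := by
    intro q h1 h2
    have h3 := htwAbs q
    rw [hw''app]
    rcases Int.lt_or_lt_of_ne (show tw q ≠ 0 by omega) with h | h
    · have := hw.2 (-(tw q)) (by omega) (by omega)
      rw [hwodd, Int.abs_eq_natAbs, Int.natAbs_neg] at this
      omega
    · have := hw.2 (tw q) (by omega) (by omega)
      rw [Int.abs_eq_natAbs] at this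
      omega
  -- L in terms of M
  have hLM : ∀ q : ℤ, 1 ≤ q.natAbs → q.natAbs ≤ n →
      Lfn n lam q = (MM n μ (u q) : ℝ) := by
    intro q h1 h2
    rw [hlam]
    exact lam_eq n w hw μ q h1 h2
  have hMMpp : ∀ x : ℤ, 1 ≤ x.natAbs → x.natAbs ≤ n → MM n μ x = Mpp n μ (tw x) := by
    intro x h1 h2
    rcases Nat.lt_or_ge x.natAbs 2 with hx | hx
    · have hx1 : x.natAbs = 1 := by omega
      have e : n + 1 - x.natAbs = n := by omega
      rcases (show x = 1 ∨ x = -1 by omega) with he | he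
      · subst he
        unfold MM Mpp
        rw [htw]
        split_ifs with hcc
        · have h0 : 0 ≤ μ n := by rcases hcc with h | ⟨h, -⟩ <;> omega
          simp [tflip_apply, abs_of_nonneg h0]
        · push_neg at hcc
          have h0 : μ n ≤ 0 := by omega
          simp [abs_of_nonpos h0]
      · subst he
        unfold MM Mpp
        rw [htw]
        split_ifs with hcc
        · have h0 : 0 ≤ μ n := by rcases hcc with h | ⟨h, -⟩ <;> omega
          simp [tflip_apply, abs_of_nonneg h0]
        · push_neg at hcc
          have h0 : μ n ≤ 0 := by omega
          simp [abs_of_nonpos h0]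
    · rw [htwfix x hx]
      unfold MM Mpp
      have hneg : μ (n + 1 - x.natAbs) ≤ -|μ n| := mu_neg n μ hmono hlast x.natAbs hx h2
      have h0 : (0:ℤ) ≤ |μ n| := abs_nonneg _
      rw [abs_of_nonpos (by linarith)]
      ring
  have hLpp : ∀ q : ℤ, 1 ≤ q.natAbs → q.natAbs ≤ n →
      Lfn n lam q = (Mpp n μ (u'' q) : ℝ) := by
    intro q h1 h2
    rw [hLM q h1 h2, hu''app]
    norm_cast
    exact hMMpp (u q) (hubnd q h1 h2).1 (hubnd q h1 h2).2
  -- the chamber condition, combinatorial form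
  have hGc : ∀ q r : ℤ, 1 ≤ q.natAbs → q.natAbs ≤ n → 1 ≤ r.natAbs → r.natAbs ≤ n →
      q < r → q ≠ -r → Lfn n lam q = Lfn n lam r → u q < u r := by
    intro q r hq1 hq2 hr1 hr2 hlt hner heq
    have hqr : q ≠ r := ne_of_lt hlt
    have hne : q.natAbs ≠ r.natAbs := by
      intro h
      rcases Int.natAbs_eq_natAbs_iff.mp h with he | he <;> omega
    rcases lt_trichotomy (u q) (u r) with h | h | h
    · exact h
    · exact absurd (u.injective h) hqr
    · exfalso
      have hubq := hubnd q hq1 hq2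
      have hubr := hubnd r hr1 hr2
      have habsu : (u r).natAbs ≠ (u q).natAbs := by
        intro hh
        rcases Int.natAbs_eq_natAbs_iff.mp hh with he | he
        · exact hqr (u.injective he.symm)
        · rw [← huodd] at he
          have := u.injective he
          exact hner (by omega)
      set α : ℕ → ℝ := fun m => Efun n r m - Efun n q m with hα
      have hmem : α ∈ PosD n := E_sub_mem n q r hq1 hq2 hr1 hr2 hne hlt
      have hform2 : formR n α α = 2 :=
        formR_EsubE_self n q r hq1 hq2 hr1 hr2 hne
      have hformlam : formR n lam α = Lfn n lam q - Lfn n lam r := by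
        rw [hα, formR_sub_right, formR_Efun n lam r hr1 hr2, formR_Efun n lam q hq1 hq2]
        unfold Lfn
        ring
      have hact : (-(act n w.symm α)) = fun m => Efun n (u q) m - Efun n (u r) m := by
        rw [hα, act_sub]
        rw [show act n w.symm = act n u by rw [hu]]
        rw [act_Efun n u huodd r hr1 hr2, act_Efun n u huodd q hq1 hq2]
        funext m
        simp only [Pi.neg_apply]
        ring
      have hmem2 : (fun m => Efun n (u q) m - Efun n (u r) m) ∈ PosD n :=
        E_sub_mem n (u r) (u q) hubr.1 hubr.2 hubq.1 hubq.2 habsu h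
      have hpos := (hchamber α hmem).mpr (by rw [hact]; exact hmem2)
      rw [hform2, hformlam] at hpos
      have : (0:ℝ) < Lfn n lam q - Lfn n lam r := by
        have e : 2 * (Lfn n lam q - Lfn n lam r) / 2 = Lfn n lam q - Lfn n lam r := by ring
        linarith [e ▸ hpos]
      linarith [heq.le]
  -- the central order equivalence
  have hH : ∀ q r : ℤ, 1 ≤ q.natAbs → q.natAbs ≤ n → 1 ≤ r.natAbs → r.natAbs ≤ n →
      q < r → (Lfn n lam q ≤ Lfn n lam r ↔ u'' q < u'' r) := by
    intro q r hq1 hq2 hr1 hr2 hlt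
    have hqr : q ≠ r := ne_of_lt hlt
    have hubq := hu''bnd q hq1 hq2
    have hubr := hu''bnd r hr1 hr2
    rw [hLpp q hq1 hq2, hLpp r hr1 hr2, Int.cast_le]
    rcases lt_trichotomy (Mpp n μ (u'' q)) (Mpp n μ (u'' r)) with hM | hM | hM
    · constructor
      · intro _
        rcases lt_trichotomy (u'' q) (u'' r) with h | h | h
        · exact h
        · exact absurd (u''.injective h) hqr
        · exact absurd (Mpp_mono n μ hmono hlast (u'' r) (u'' q) hubr.1 hubr.2
            hubq.1 hubq.2 h) (by omega)
      · intro _; exact hM.le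
    · constructor
      swap
      · intro _; exact le_of_eq hM
      intro _
      by_cases habs : q.natAbs = r.natAbs
      · -- q = -r
        have hqreq : q = -r := by
          rcases Int.natAbs_eq_natAbs_iff.mp habs with he | he
          · exact absurd he hqr
          · exact he
        subst hqreq
        have hr0 : 0 < r := by omega
        rw [hu''odd]
        rw [hu''odd, Mpp_odd] at hM
        have hM0 : Mpp n μ (u'' r) = 0 := by omega
        have hmu0 : μ (n + 1 - (u r).natAbs) = 0 := by
          unfold Mpp at hM0
          rw [hu''abs] at hM0
          have hune : u'' r ≠ 0 := by
            have := hubr.1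
            omega
          rcases Int.lt_or_lt_of_ne hune with h | h
          · rw [Int.sign_eq_neg_one_of_neg h] at hM0
            have : |μ (n + 1 - (u r).natAbs)| = 0 := by linarith
            exact abs_eq_zero.mp this
          · rw [Int.sign_eq_one_of_pos h] at hM0
            have : |μ (n + 1 - (u r).natAbs)| = 0 := by linarith
            exact abs_eq_zero.mp this
        suffices hpos : 0 < u'' r by linarith
        have hub := hubnd r hr1 hr2
        by_cases h1abs : (u r).natAbs = 1
        · rcases (show u r = 1 ∨ u r = -1 by omega) with he | he
          · have hw1 : w 1 = r := by
              have := w.apply_symm_apply r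
              rw [show w.symm r = u r from rfl, he] at this
              exact this
            have hμn : μ n = 0 := by
              rw [h1abs, show n + 1 - 1 = n by omega] at hmu0
              exact hmu0
            have hncc : ¬(0 < μ n ∨ (μ n = 0 ∧ w 1 < 0)) := by
              push_neg
              constructor
              · omega
              · intro _
                rw [hw1]
                omega
            rw [hu''app, he, htw, if_neg hncc]
            norm_num
          · have hw1 : w 1 = -r := by
              have h2 := w.apply_symm_apply r
              rw [show w.symm r = u r from rfl, he] at h2
              have := hwodd 1
              omega
            have hμn : μ n = 0 := by
              rw [h1abs, show n + 1 - 1 = n by omega] at hmu0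
              exact hmu0
            have hcc : (0 < μ n ∨ (μ n = 0 ∧ w 1 < 0)) := Or.inr ⟨hμn, by omega⟩
            rw [hu''app, he, htw, if_pos hcc, show tflip (-1) = 1 from rfl]
            norm_num
        · have h2a : 2 ≤ (u r).natAbs := by omega
          have hμn0 : μ n = 0 := by
            have h1 := mu_neg n μ hmono hlast (u r).natAbs h2a hub.2
            rw [hmu0] at h1
            have h2' := abs_nonneg (μ n)
            have h3 : |μ n| = 0 := by linarith
            exact abs_eq_zero.mp h3
          have hn1 : 1 ≤ n := by omega
          have hb' := hw.2 1 (by norm_num) (by exact_mod_cast hn1)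
          rw [Int.abs_eq_natAbs] at hb'
          set b : ℕ := (w 1).natAbs with hbdef
          have hb1 : 1 ≤ b := by omega
          have hb2 : b ≤ n := by omega
          have hbabs : ((b:ℤ)).natAbs = b := Int.natAbs_natCast b
          have hub1 : u (b:ℤ) = 1 ∨ u (b:ℤ) = -1 := by
            rcases Int.lt_or_lt_of_ne (show w 1 ≠ 0 by omega) with h | h
            · right
              have e : ((b:ℤ)) = -(w 1) := by omega
              rw [e, ← hwodd]
              exact w.symm_apply_apply (-1)
            · left
              have e : ((b:ℤ)) = w 1 := by omega
              rw [e]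
              exact w.symm_apply_apply 1
          have hbr : (b:ℤ) ≠ r := by
            intro he
            rw [he] at hub1
            rcases hub1 with h | h <;> rw [h] at h2a <;> simp at h2a
          have hLr : Lfn n lam r = 0 := by
            rw [hLM r hr1 hr2]
            unfold MM
            rw [hmu0, mul_zero]
            norm_num
          have hLb : Lfn n lam (b:ℤ) = 0 := by
            rw [hLM (b:ℤ) (by omega) (by omega)]
            have : MM n μ (u (b:ℤ)) = 0 := by
              rcases hub1 with he | he <;> rw [he] <;> unfold MM <;>
                simp [hμn0]
            rw [this]
            norm_num
          rcases lt_trichotomy ((b:ℤ)) r with hblt | hbeq | hblt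
          · have hlt1 : u (b:ℤ) < u r :=
              hGc (b:ℤ) r (by omega) (by omega) hr1 hr2 hblt (by omega)
                (by rw [hLb, hLr])
            have hlt2 : u (-(b:ℤ)) < u r :=
              hGc (-(b:ℤ)) r (by omega) (by omega) hr1 hr2 (by omega) (by omega)
                (by rw [Lfn_odd, hLb, hLr]; norm_num)
            rw [huodd] at hlt2
            have hur2 : 1 < u r := by rcases hub1 with he | he <;> omega
            rw [hu''app, htwfix (u r) (by omega)]
            omega
          · exact absurd hbeq hbr
          · exfalso
            have hlt1 : u r < u (b:ℤ) :=
              hGc r (b:ℤ) hr1 hr2 (by omega) (by omega) hblt (by omega)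
                (by rw [hLb, hLr])
            have hlt2 : u (-r) < u (b:ℤ) :=
              hGc (-r) (b:ℤ) (by omega) (by omega) (by omega) (by omega) (by omega)
                (by omega) (by rw [Lfn_odd, hLb, hLr]; norm_num)
            rw [huodd] at hlt2
            rcases hub1 with he | he <;> omega
      · -- |q| ≠ |r|
        have heqL : Lfn n lam q = Lfn n lam r := by
          rw [hLpp q hq1 hq2, hLpp r hr1 hr2, hM]
        have hlt2 : u q < u r := hGc q r hq1 hq2 hr1 hr2 hlt
          (by intro h; apply habs; rw [h, Int.natAbs_neg]) heqL
        have habsu : (u q).natAbs ≠ (u r).natAbs := by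
          intro hh
          rcases Int.natAbs_eq_natAbs_iff.mp hh with he | he
          · exact hqr (u.injective he)
          · rw [← huodd] at he
            apply habs
            have := u.injective he
            rw [this, Int.natAbs_neg]
        have hubq' := hubnd q hq1 hq2
        have hubr' := hubnd r hr1 hr2
        rw [hu''app, hu''app]
        exact (htwlt (u q) (u r) hubq'.1 hubr'.1 habsu).mp hlt2
    · constructor
      · intro h; omega
      · intro h
        exact absurd (Mpp_mono n μ hmono hlast (u'' q) (u'' r) hubq.1 hubq.2
          hubr.1 hubr.2 h) (by omega)
  -- assembly
  set σf : ℕ → ℕ := fun i => ncIdx n (u'' (sIdx n i)) with hσf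
  set τf : ℕ → ℕ := fun i => ncIdx n (w'' (sIdx n i)) with hτf
  have hσbnd : ∀ i, 1 ≤ i → i ≤ 2 * n → 1 ≤ σf i ∧ σf i ≤ 2 * n := by
    intro i h1 h2
    have hs := sIdx_bounds h1 h2
    have hb := hu''bnd _ hs.1 hs.2
    exact ncIdx_bounds hb.1 hb.2
  have hτbnd : ∀ i, 1 ≤ i → i ≤ 2 * n → 1 ≤ τf i ∧ τf i ≤ 2 * n := by
    intro i h1 h2
    have hs := sIdx_bounds h1 h2
    have hb := hw''bnd _ hs.1 hs.2
    exact ncIdx_bounds hb.1 hb.2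
  have hτσ : ∀ i, 1 ≤ i → i ≤ 2 * n → τf (σf i) = i := by
    intro i h1 h2
    have hs := sIdx_bounds h1 h2
    have hb := hu''bnd _ hs.1 hs.2
    show ncIdx n (w'' (sIdx n (ncIdx n (u'' (sIdx n i))))) = i
    rw [sIdx_ncIdx hb.1 hb.2, hw''u'', ncIdx_sIdx h1 h2]
  have hστ : ∀ i, 1 ≤ i → i ≤ 2 * n → σf (τf i) = i := by
    intro i h1 h2
    have hs := sIdx_bounds h1 h2
    have hb := hw''bnd _ hs.1 hs.2
    show ncIdx n (u'' (sIdx n (ncIdx n (w'' (sIdx n i))))) = i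
    rw [sIdx_ncIdx hb.1 hb.2, hu''w'', ncIdx_sIdx h1 h2]
  have hkey : ∀ k, greeneC (2 * n) (supMinus n lam) k =
      greeneC (2 * n) (preMinus n (fun j => w'' (j : ℤ))) k := by
    intro k
    have e1 : greeneC (2 * n) (supMinus n lam) k = greeneC (2 * n) σf k := by
      apply greene_congr
      intro i j h1 hij h2
      have hsi := sIdx_bounds (n := n) h1 (by omega : i ≤ 2 * n)
      have hsj := sIdx_bounds (n := n) (by omega : 1 ≤ j) h2
      have hbi := hu''bnd _ hsi.1 hsi.2
      have hbj := hu''bnd _ hsj.1 hsj.2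
      rw [supMinus_eq n i lam h1 (by omega), supMinus_eq n j lam (by omega) h2]
      rw [hH (sIdx n i) (sIdx n j) hsi.1 hsi.2 hsj.1 hsj.2
        (sIdx_strictMono h1 hij h2)]
      constructor
      · intro h
        exact (ncIdx_strictMono hbi.1 hbi.2 hbj.1 hbj.2 h).le
      · intro h
        rcases lt_trichotomy (u'' (sIdx n i)) (u'' (sIdx n j)) with hh | hh | hh
        · exact hh
        · exfalso
          have := u''.injective hh
          have hne := ne_of_lt (sIdx_strictMono h1 hij h2)
          exact hne this
        · exfalso
          have := ncIdx_strictMono hbj.1 hbj.2 hbi.1 hbi.2 hh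
          show False
          have hle : σf i ≤ σf j := h
          have : σf j < σf i := this
          omega
    have e2 : greeneC (2 * n) σf k = greeneC (2 * n) τf k :=
      greene_inverse (2 * n) k σf τf hσbnd hτbnd hτσ hστ
    have e3 : greeneC (2 * n) τf k =
        greeneC (2 * n) (preMinus n (fun j => w'' (j : ℤ))) k := by
      apply greene_congr
      intro i j h1 hij h2
      have hsi := sIdx_bounds (n := n) h1 (by omega : i ≤ 2 * n)
      have hsj := sIdx_bounds (n := n) (by omega : 1 ≤ j) h2
      have hbi := hw''bnd _ hsi.1 hsi.2
      have hbj := hw''bnd _ hsj.1 hsj.2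
      rw [preMinus_eq n i w'' hw''odd h1 (by omega),
        preMinus_eq n j w'' hw''odd (by omega) h2]
      constructor
      · intro h
        rcases lt_trichotomy (w'' (sIdx n i)) (w'' (sIdx n j)) with hh | hh | hh
        · exact hh.le
        · exact le_of_eq hh
        · exfalso
          have hlt' := ncIdx_strictMono hbj.1 hbj.2 hbi.1 hbi.2 hh
          have hle : τf i ≤ τf j := h
          have e1' : τf i = ncIdx n (w'' (sIdx n i)) := rfl
          have e2' : τf j = ncIdx n (w'' (sIdx n j)) := rfl
          omega
      · intro h
        rcases lt_trichotomy (w'' (sIdx n i)) (w'' (sIdx n j)) with hh | hh | hh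
        · exact (ncIdx_strictMono hbi.1 hbi.2 hbj.1 hbj.2 hh).le
        · show ncIdx n (w'' (sIdx n i)) ≤ ncIdx n (w'' (sIdx n j))
          rw [hh]
        · exact absurd hh (not_lt.mpr h)
    rw [e1, e2, e3]
  by_cases hcc : 0 < μ n ∨ (μ n = 0 ∧ w 1 < 0)
  · right
    intro k _
    have hfun : (fun j : ℕ => if j = 1 then -w (j : ℤ) else w (j : ℤ)) =
        (fun j : ℕ => w'' (j : ℤ)) := by
      funext j
      rw [hw''app, htw, if_pos hcc]
      by_cases hj : j = 1
      · subst hj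
        have e : ((1:ℕ):ℤ) = 1 := by norm_num
        rw [if_pos rfl, e, show tflip 1 = -1 by rw [tflip_apply]; norm_num,
          show (-1:ℤ) = -(1:ℤ) by norm_num, hwodd]
      · rw [if_neg hj, tflip_apply, if_neg (by omega), if_neg (by omega)]
    rw [hfun]
    unfold rsShape
    rw [hkey k, hkey (k - 1)]
  · left
    intro k _
    have hfun : (fun j : ℕ => w (j : ℤ)) = (fun j : ℕ => w'' (j : ℤ)) := by
      funext j
      rw [hw''app, htw, if_neg hcc]
      rfl
    rw [hfun]
    unfold rsShape
    rw [hkey k, hkey (k - 1)]
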